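/- Let H be a Banach space, H' a normed vector space, K : H → H' a compact continuous linear map, and N ⊆ H a linear subspace. Suppose there exists c > 0 such that ‖u‖_H ≤ c‖Ku‖_{H'} for every u ∈ N. Then N is finite-dimensional. -/
import Mathlib


/-- **Riesz-lemma step of the uniqueness-compactness argument.** Let `H` be a Banach
space, `H'` a normed space, `K : H → H'` a compact continuous linear map, and
`N ⊆ H` a subspace on which `‖u‖ ≤ c‖Ku‖` for some `c > 0`. Then `N` is
finite-dimensional. -/
theorem finite_dim_of_compact_bound
    (H H' : Type*) [NormedAddCommGroup H] [NormedSpace ℝ H] [CompleteSpace H]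
    [NormedAddCommGroup H'] [NormedSpace ℝ H']
    (K : H →L[ℝ] H') (hK : IsCompactOperator K)
    (N : Submodule ℝ H) (c : ℝ) (hc : 0 < c)
    (hbound : ∀ u ∈ N, ‖u‖ ≤ c * ‖K u‖) :
    FiniteDimensional ℝ N := by
  -- pass to the topological closure `M` of `N`, which is complete
  set M := N.topologicalClosure with hM
  have hbM : ∀ u ∈ M, ‖u‖ ≤ c * ‖K u‖ := by
    have hcl : IsClosed {u : H | ‖u‖ ≤ c * ‖K u‖} :=
      isClosed_le (by fun_prop) (by fun_prop)
    intro u hu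
    have hsub : (N : Set H) ⊆ {u : H | ‖u‖ ≤ c * ‖K u‖} := fun x hx => hbound x hx
    exact hcl.closure_subset_iff.mpr hsub hu
  haveI : CompleteSpace M :=
    N.isClosed_topologicalClosure.completeSpace_coe
  -- the restriction of `K` to `M` is antilipschitz
  set g : M →L[ℝ] H' := K.comp M.subtypeL with hg
  have hanti : AntilipschitzWith c.toNNReal g := by
    apply AddMonoidHomClass.antilipschitz_of_bound
    intro x
    have := hbM (x : H) x.2
    simpa [hg, Real.coe_toNNReal _ hc.le] using this
  -- the closed unit ball of `M` is totally bounded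
  have htb : TotallyBounded (Metric.closedBall (0 : M) 1) := by
    have hui : IsUniformInducing g := hanti.isUniformInducing g.uniformContinuous
    have h1 : TotallyBounded (g ⁻¹' closure (K '' Metric.closedBall 0 1)) :=
      totallyBounded_preimage hui (hK.isCompact_closure_image_closedBall 1).totallyBounded
    refine h1.subset ?_
    intro y hy
    apply subset_closure
    refine ⟨(y : H), ?_, rfl⟩
    simpa [Metric.mem_closedBall, dist_eq_norm] using hy
  -- hence the closed unit ball of `M` is compact, so `M` is finite dimensional
  have hcomp : IsCompact (Metric.closedBall (0 : M) 1) :=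
    isCompact_iff_totallyBounded_isComplete.2
      ⟨htb, Metric.isClosed_closedBall.isComplete⟩
  haveI : FiniteDimensional ℝ M :=
    FiniteDimensional.of_isCompact_closedBall₀ ℝ one_pos hcomp
  exact Submodule.finiteDimensional_of_le N.le_topologicalClosure
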